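/- arXiv:1407.3993 — 5 statements merged into one kernel-verified Lean document; each statement's English description precedes it below -/
import Mathlib

section
/- Let μ : ℕ → ℤ be a Conley–Zehnder iteration sequence. Then for every integer k ≥ 1 one has k·μ(1) − k + 1 ≤ μ(k) ≤ k·μ(1) + k − 1. (This is the paper's Proposition that in dimension 3 the Conley–Zehnder index grows almost linearly under iteration: for any closed Reeb orbit γ of a nondegenerate contact 3-manifold, k·μ_CZ(γ) − k + 1 ≤ μ_CZ(γ^k) ≤ k·μ_CZ(γ) + k − 1.) -/
/-!
In the hyperbolic case `μ k = k μ(1)` exactly. In the elliptic case `μ(1) = 2⌊θ⌋ + 1`, and both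
bounds reduce to `k⌊θ⌋ ≤ ⌊kθ⌋ < k⌊θ⌋ + k`, i.e. to `⌊kθ⌋ / k = ⌊θ⌋` in integer division.
-/

/-- A Conley–Zehnder iteration sequence of elliptic type: there is a
non-integer real rotation angle `θ` with `μ k = 2⌊kθ⌋ + 1` for all `k ≥ 1`. -/
def IsEllipticCZSeq (μ : ℕ → ℤ) : Prop :=
  ∃ θ : ℝ, (∀ n : ℤ, θ ≠ (n : ℝ)) ∧ ∀ k : ℕ, 1 ≤ k → μ k = 2 * ⌊(k : ℝ) * θ⌋ + 1

/-- A Conley–Zehnder iteration sequence of hyperbolic type: there is an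
integer `r` with `μ k = k·r` for all `k ≥ 1`. -/
def IsHyperbolicCZSeq (μ : ℕ → ℤ) : Prop :=
  ∃ r : ℤ, ∀ k : ℕ, 1 ≤ k → μ k = (k : ℤ) * r

/-- A Conley–Zehnder iteration sequence: either elliptic or hyperbolic type. -/
def IsCZSeq (μ : ℕ → ℤ) : Prop :=
  IsEllipticCZSeq μ ∨ IsHyperbolicCZSeq μ

section FloorMul

variable {R : Type*} [Ring R] [LinearOrder R] [IsStrictOrderedRing R] [FloorRing R]

theorem Int.natCast_mul_floor_le_floor_natCast_mul (n : ℕ) (a : R) :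
    (n : ℤ) * ⌊a⌋ ≤ ⌊(n : R) * a⌋ := by
  rw [Int.le_floor, Int.cast_mul, Int.cast_natCast]
  exact mul_le_mul_of_nonneg_left (Int.floor_le a) n.cast_nonneg

theorem Int.floor_natCast_mul_lt_natCast_mul_floor_add {n : ℕ} (hn : 0 < n) (a : R) :
    ⌊(n : R) * a⌋ < (n : ℤ) * ⌊a⌋ + n := by
  have hn' : (0 : ℤ) < n := by exact_mod_cast hn
  rw [← mul_add_one, mul_comm, ← Int.ediv_lt_iff_lt_mul hn',
    Int.natCast_mul_floor_div_cancel hn.ne' a]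
  exact lt_add_one _

end FloorMul

theorem IsEllipticCZSeq.almost_linear {μ : ℕ → ℤ} (hμ : IsEllipticCZSeq μ) {k : ℕ} (hk : 1 ≤ k) :
    (k : ℤ) * μ 1 - k + 1 ≤ μ k ∧ μ k ≤ (k : ℤ) * μ 1 + k - 1 := by
  obtain ⟨θ, -, hμθ⟩ := hμ
  have hlow := Int.natCast_mul_floor_le_floor_natCast_mul k θ
  have hup := Int.floor_natCast_mul_lt_natCast_mul_floor_add hk θ
  have hμ1 : μ 1 = 2 * ⌊θ⌋ + 1 := by simpa using hμθ 1 le_rfl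
  rw [hμθ k hk, hμ1]
  constructor <;> linarith

theorem IsHyperbolicCZSeq.eq_mul {μ : ℕ → ℤ} (hμ : IsHyperbolicCZSeq μ) {k : ℕ} (hk : 1 ≤ k) :
    μ k = k * μ 1 := by
  obtain ⟨r, hμr⟩ := hμ
  rw [hμr k hk, hμr 1 le_rfl, Nat.cast_one, one_mul]

/-- Almost-linear growth of the Conley–Zehnder index under iteration:
for any Conley–Zehnder iteration sequence μ and any k ≥ 1,
k·μ(1) − k + 1 ≤ μ(k) ≤ k·μ(1) + k − 1. -/
theorem cz_almost_linear (μ : ℕ → ℤ) (hμ : IsCZSeq μ) (k : ℕ) (hk : 1 ≤ k) :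
    (k : ℤ) * μ 1 - k + 1 ≤ μ k ∧ μ k ≤ (k : ℤ) * μ 1 + k - 1 := by
  rcases hμ with hell | hhyp
  · exact hell.almost_linear hk
  · have hk' : (1 : ℤ) ≤ k := by exact_mod_cast hk
    rw [hhyp.eq_mul hk]
    constructor <;> linarith
end

section
/- Let μ₊ and μ₋ be Conley–Zehnder iteration sequences with μ₊(1) − μ₋(1) = 1, and suppose at least one of μ₊, μ₋ is of hyperbolic type. Then for every integer k ≥ 1 one has μ₊(k) − μ₋(k) ≥ 1. (Numeric content of the second case of the paper's proposition on covers of cylinders: a k-fold cover of an index-1 cylinder, one of whose asymptotic orbits is hyperbolic, has Fredholm index at least 1.) -/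
/-!
Every Conley–Zehnder iteration sequence satisfies
`k (μ 1 - 1) + 1 ≤ μ k ≤ k (μ 1 + 1) - 1`: for elliptic type this is
`k ⌊θ⌋ ≤ ⌊k θ⌋ < k (⌊θ⌋ + 1)`, and for hyperbolic type `μ k = k μ 1`.
If one end is hyperbolic, its index grows exactly linearly, and the bound on the
other end together with `μ₊ 1 = μ₋ 1 + 1` gives `μ₊ k - μ₋ k ≥ 1`.
-/

namespace Int

variable {α : Type*} [Ring α] [LinearOrder α] [IsStrictOrderedRing α] [FloorRing α]

theorem nat_mul_floor_le_floor_nat_mul (n : ℕ) (a : α) : (n : ℤ) * ⌊a⌋ ≤ ⌊(n : α) * a⌋ :=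
  le_floor.mpr <| by
    push_cast
    exact mul_le_mul_of_nonneg_left (floor_le a) n.cast_nonneg

theorem floor_nat_mul_lt {n : ℕ} (hn : 0 < n) (a : α) : ⌊(n : α) * a⌋ < (n : ℤ) * (⌊a⌋ + 1) :=
  floor_lt.mpr <| by
    push_cast
    exact mul_lt_mul_of_pos_left (lt_floor_add_one a) (Nat.cast_pos.mpr hn)

end Int

section

variable {μ : ℕ → ℤ} {k : ℕ}

theorem IsHyperbolicCZSeq.apply_eq (hμ : IsHyperbolicCZSeq μ) (hk : 1 ≤ k) : μ k = k * μ 1 := by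
  obtain ⟨r, hr⟩ := hμ
  rw [hr k hk, hr 1 le_rfl, Nat.cast_one, one_mul]

theorem IsEllipticCZSeq.le_apply (hμ : IsEllipticCZSeq μ) (hk : 1 ≤ k) :
    k * (μ 1 - 1) + 1 ≤ μ k := by
  obtain ⟨θ, -, hθ⟩ := hμ
  rw [hθ k hk, hθ 1 le_rfl, Nat.cast_one, one_mul]
  linarith [Int.nat_mul_floor_le_floor_nat_mul k θ]

theorem IsEllipticCZSeq.apply_le (hμ : IsEllipticCZSeq μ) (hk : 1 ≤ k) :
    μ k ≤ k * (μ 1 + 1) - 1 := by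
  obtain ⟨θ, -, hθ⟩ := hμ
  rw [hθ k hk, hθ 1 le_rfl, Nat.cast_one, one_mul]
  linarith [Int.floor_nat_mul_lt hk θ]

theorem IsCZSeq.le_apply (hμ : IsCZSeq μ) (hk : 1 ≤ k) : k * (μ 1 - 1) + 1 ≤ μ k := by
  rcases hμ with hell | hhyp
  · exact hell.le_apply hk
  · rw [hhyp.apply_eq hk]
    linarith [(Nat.one_le_cast (α := ℤ)).mpr hk]

theorem IsCZSeq.apply_le (hμ : IsCZSeq μ) (hk : 1 ≤ k) : μ k ≤ k * (μ 1 + 1) - 1 := by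
  rcases hμ with hell | hhyp
  · exact hell.apply_le hk
  · rw [hhyp.apply_eq hk]
    linarith [(Nat.one_le_cast (α := ℤ)).mpr hk]

end

/-- If μ₊(1) − μ₋(1) = 1 and at least one of μ₊, μ₋ is of hyperbolic type,
then μ₊(k) − μ₋(k) ≥ 1 for every k ≥ 1. -/
theorem cz_index_one_hyperbolic_iterates (μpos μneg : ℕ → ℤ)
    (hpos : IsCZSeq μpos) (hneg : IsCZSeq μneg)
    (h : μpos 1 - μneg 1 = 1)
    (hhyp : IsHyperbolicCZSeq μpos ∨ IsHyperbolicCZSeq μneg)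
    (k : ℕ) (hk : 1 ≤ k) :
    μpos k - μneg k ≥ 1 := by
  rcases hhyp with hpos_hyp | hneg_hyp
  · linear_combination hneg.apply_le hk - (k : ℤ) * h - hpos_hyp.apply_eq hk
  · linear_combination hpos.le_apply hk - (k : ℤ) * h + hneg_hyp.apply_eq hk
end

section
/- Let μ₊ and μ₋ be Conley–Zehnder iteration sequences with μ₊(1) − μ₋(1) ≥ 3. Then for every integer k ≥ 1 one has μ₊(k) − μ₋(k) ≥ 3. (Numeric content of the index step in the paper's lemma on unbranched covers: if a k-fold unbranched cover of a cylinder has Fredholm index at most 2, then the underlying somewhere injective cylinder also has Fredholm index at most 2.) -/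
section FloorNatCastMul

variable {R : Type*} [Ring R] [LinearOrder R] [IsStrictOrderedRing R] [FloorRing R]

theorem Int.floor_natCast_mul_lt {n : ℕ} (hn : n ≠ 0) (a : R) :
    ⌊(n : R) * a⌋ < n * ⌊a⌋ + n := by
  simpa only [Int.natCast_mul_floor_div_cancel hn] using
    Int.lt_mul_ediv_self_add (x := ⌊(n : R) * a⌋) (k := n) (by omega)

end FloorNatCastMul

namespace IsCZSeq

variable {μ : ℕ → ℤ} {k : ℕ}

theorem le_apply_s5 (hμ : IsCZSeq μ) (hk : 1 ≤ k) : k * (μ 1 - 1) + 1 ≤ μ k := by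
  have hk' : (1 : ℤ) ≤ k := by exact_mod_cast hk
  rcases hμ with ⟨θ, -, hθ⟩ | ⟨r, hr⟩
  · rw [hθ k hk, hθ 1 le_rfl, Nat.cast_one, one_mul]
    linarith [Int.natCast_mul_floor_le_floor_natCast_mul k θ]
  · rw [hr k hk, hr 1 le_rfl, Nat.cast_one, one_mul]
    linarith

theorem apply_le_s5 (hμ : IsCZSeq μ) (hk : 1 ≤ k) : μ k ≤ k * (μ 1 + 1) - 1 := by
  have hk' : (1 : ℤ) ≤ k := by exact_mod_cast hk
  rcases hμ with ⟨θ, -, hθ⟩ | ⟨r, hr⟩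
  · rw [hθ k hk, hθ 1 le_rfl, Nat.cast_one, one_mul]
    linarith [Int.floor_natCast_mul_lt (Nat.one_le_iff_ne_zero.1 hk) θ]
  · rw [hr k hk, hr 1 le_rfl, Nat.cast_one, one_mul]
    linarith

end IsCZSeq

/-- If μ₊(1) − μ₋(1) ≥ 3 then μ₊(k) − μ₋(k) ≥ 3 for every k ≥ 1. -/
theorem cz_index_ge_three_iterates (μpos μneg : ℕ → ℤ)
    (hpos : IsCZSeq μpos) (hneg : IsCZSeq μneg)
    (h : μpos 1 - μneg 1 ≥ 3) (k : ℕ) (hk : 1 ≤ k) :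
    μpos k - μneg k ≥ 3 := by
  have hk' : (1 : ℤ) ≤ k := by exact_mod_cast hk
  calc (3 : ℤ) ≤ k * (μpos 1 - μneg 1 - 2) + 2 := by nlinarith
    _ = (k * (μpos 1 - 1) + 1) - (k * (μneg 1 + 1) - 1) := by ring
    _ ≤ μpos k - μneg k := sub_le_sub (hpos.le_apply_s5 hk) (hneg.apply_le_s5 hk)
end

section
/- Let s ≥ 0, k ≥ 1 and b ≥ 0 be integers, and let μ₊ and μ₀, …, μ_s be Conley–Zehnder iteration sequences satisfying the index hypothesis s + μ₊(1) − (μ₀(1) + ⋯ + μ_s(1)) ≥ 1. For each i ∈ {0, …, s}, let e_{i,1}, …, e_{i,nᵢ} be positive integers with e_{i,1} + ⋯ + e_{i,nᵢ} = k, and suppose n₀ + ⋯ + n_s = 1 + k·s + b. Then (k·s + b) + μ₊(k) − Σᵢ Σⱼ μᵢ(e_{i,j}) ≥ 2 − k + 2b. (This is the index estimate in the paper's proposition on branched covers: a genus-zero k-fold cover with one positive puncture and b branch points counted with multiplicity of a somewhere injective curve with one positive end and s+1 negative ends, in the symplectization of a nondegenerate contact 3-manifold with generic J, has 1 + ks +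 b negative punctures and Fredholm index at least 2 − k + 2b.) -/
/-!
For a Conley–Zehnder iteration sequence `μ` the iterates grow quasi-linearly:
`|μ k - k μ(1)| ≤ k - 1`, since `k⌊θ⌋ ≤ ⌊kθ⌋ ≤ k⌊θ⌋ + k - 1`. Bounding `μ₊(k)` from below and
each `μᵢ(eᵢⱼ)` from above, a fibre with `nᵢ` preimages costs at most `k μᵢ(1) + k - nᵢ`, so the
index of the cover is at least `k` times the index `≥ 1` of the underlying curve plus `2b + 2 - 2k`.
-/

open Finset

section Floor

variable {α : Type*} [Ring α] [LinearOrder α] [IsStrictOrderedRing α] [FloorRing α]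

lemma Int.natCast_mul_floor_le_floor_natCast_mul_s6 (k : ℕ) (a : α) :
    (k : ℤ) * ⌊a⌋ ≤ ⌊(k : α) * a⌋ := by
  rw [Int.le_floor]
  push_cast
  exact mul_le_mul_of_nonneg_left (Int.floor_le a) k.cast_nonneg

lemma Int.floor_natCast_mul_lt_s6 {k : ℕ} (hk : 0 < k) (a : α) :
    ⌊(k : α) * a⌋ < (k : ℤ) * ⌊a⌋ + k := by
  rw [Int.floor_lt]
  push_cast
  rw [← mul_add_one]
  exact mul_lt_mul_of_pos_left (Int.lt_floor_add_one a) (by exact_mod_cast hk)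

end Floor

namespace IsCZSeq

variable {μ : ℕ → ℤ}

lemma mul_apply_one_sub_le (h : IsCZSeq μ) {k : ℕ} (hk : 1 ≤ k) :
    (k : ℤ) * μ 1 - (k - 1) ≤ μ k := by
  rcases h with ⟨θ, -, hθ⟩ | ⟨r, hr⟩
  · have hfloor := Int.natCast_mul_floor_le_floor_natCast_mul_s6 k θ
    rw [hθ k hk, hθ 1 le_rfl, Nat.cast_one, one_mul]
    linarith
  · rw [hr k hk, hr 1 le_rfl]
    push_cast
    linarith

lemma apply_le_mul_apply_one_add (h : IsCZSeq μ) {k : ℕ} (hk : 1 ≤ k) :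
    μ k ≤ (k : ℤ) * μ 1 + (k - 1) := by
  rcases h with ⟨θ, -, hθ⟩ | ⟨r, hr⟩
  · have hfloor := Int.floor_natCast_mul_lt_s6 hk θ
    rw [hθ k hk, hθ 1 le_rfl, Nat.cast_one, one_mul]
    linarith
  · rw [hr k hk, hr 1 le_rfl]
    push_cast
    linarith

lemma sum_apply_le (h : IsCZSeq μ) {ι : Type*} [Fintype ι] (e : ι → ℕ) (he : ∀ j, 1 ≤ e j) :
    ∑ j, μ (e j) ≤ ((∑ j, e j : ℕ) : ℤ) * μ 1 + (∑ j, e j : ℕ) - Fintype.card ι :=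
  calc ∑ j, μ (e j) ≤ ∑ j, ((e j : ℤ) * μ 1 + (e j - 1)) :=
        sum_le_sum fun j _ => h.apply_le_mul_apply_one_add (he j)
    _ = ((∑ j, e j : ℕ) : ℤ) * μ 1 + (∑ j, e j : ℕ) - Fintype.card ι := by
        push_cast
        rw [sum_add_distrib, sum_sub_distrib, ← sum_mul, sum_const, card_univ, nsmul_one]
        ring

end IsCZSeq

/-- Index estimate for branched covers of a somewhere injective curve with one
positive end and s+1 negative ends: if the underlying index
s + μ₊(1) − ∑ᵢ μᵢ(1) is at least 1, and the k-fold cover has covering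
multiplicities e i j over the i-th negative orbit (each summing to k over j),
with the total number of negative punctures ∑ᵢ nᵢ = 1 + k·s + b, then the
Fredholm index (k·s + b) + μ₊(k) − ∑ᵢ∑ⱼ μᵢ(e i j) is at least 2 − k + 2b. -/
theorem cz_branched_cover_index (s k b : ℕ) (hk : 1 ≤ k)
    (μpos : ℕ → ℤ) (μ : Fin (s + 1) → ℕ → ℤ)
    (hpos : IsCZSeq μpos) (hμ : ∀ i, IsCZSeq (μ i))
    (hind : (s : ℤ) + μpos 1 - ∑ i, μ i 1 ≥ 1)
    (n : Fin (s + 1) → ℕ) (e : (i : Fin (s + 1)) → Fin (n i) → ℕ)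
    (he : ∀ i j, 1 ≤ e i j) (hesum : ∀ i, ∑ j, e i j = k)
    (hn : ∑ i, n i = 1 + k * s + b) :
    ((k * s + b : ℕ) : ℤ) + μpos k - ∑ i, ∑ j, μ i (e i j) ≥
      2 - (k : ℤ) + 2 * b := by
  have hposEnd := hpos.mul_apply_one_sub_le hk
  have hnegEnds : ∑ i, ∑ j, μ i (e i j) ≤ k * ∑ i, μ i 1 + (s + 1) * k - (1 + k * s + b) :=
    calc ∑ i, ∑ j, μ i (e i j) ≤ ∑ i, ((k : ℤ) * μ i 1 + k - n i) := sum_le_sum fun i _ => by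
          simpa [hesum i] using (hμ i).sum_apply_le (e i) (he i)
      _ = k * ∑ i, μ i 1 + (s + 1) * k - (1 + k * s + b) := by
          have hn' : ∑ i, (n i : ℤ) = 1 + k * s + b := by exact_mod_cast hn
          rw [sum_sub_distrib, sum_add_distrib, ← mul_sum, hn', sum_const, card_univ,
            Fintype.card_fin, nsmul_eq_mul]
          push_cast
          ring
  have hcover : (k : ℤ) * 1 ≤ k * (s + μpos 1 - ∑ i, μ i 1) :=
    mul_le_mul_of_nonneg_left hind k.cast_nonneg
  push_cast
  linarith
end

section
/- Let μ₊ and μ₋ be Conley–Zehnder iteration sequences with μ₊(1) − μ₋(1) ≥ 2, and let k₁, …, k_n be positive integers with k = k₁ + ⋯ + k_n. Then (n − 1) + μ₊(k) − (μ₋(k₁) + ⋯ + μ₋(k_n)) ≥ 2n. (This is case (i) of the paper's proposition: a genus-zero branched k-fold cover with one positive puncture of a nontrivial cylinder u of index ind(u) ≥ 2, lying in M^J(γ₊^k; γ₋^{k₁},…,γ₋^{k_n}), has Fredholm index at least 2n.) -/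
theorem Int.floor_natCast_mul_sub_mul_floor_mem_Ico {R : Type*} [Ring R] [LinearOrder R]
    [IsStrictOrderedRing R] [FloorRing R] {n : ℕ} (hn : n ≠ 0) (a : R) :
    ⌊(n : R) * a⌋ - n * ⌊a⌋ ∈ Set.Ico 0 (n : ℤ) := by
  have hn' : (n : ℤ) ≠ 0 := by exact_mod_cast hn
  have hrem : ⌊(n : R) * a⌋ - n * ⌊a⌋ = ⌊(n : R) * a⌋ % n := by
    rw [← Int.natCast_mul_floor_div_cancel hn a, Int.emod_def]
  rw [hrem]
  exact ⟨Int.emod_nonneg _ hn', Int.emod_lt_of_pos _ (by omega)⟩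

theorem IsCZSeq.abs_sub_mul_le {μ : ℕ → ℤ} (hμ : IsCZSeq μ) {k : ℕ} (hk : 1 ≤ k) :
    |μ k - k * μ 1| ≤ k - 1 := by
  rcases hμ with ⟨θ, -, hθ⟩ | ⟨r, hr⟩
  · obtain ⟨hlo, hhi⟩ := Int.floor_natCast_mul_sub_mul_floor_mem_Ico (by omega : k ≠ 0) θ
    rw [hθ k hk, hθ 1 le_rfl, Nat.cast_one, one_mul, abs_le]
    constructor <;> linarith
  · rw [hr k hk, hr 1 le_rfl, Nat.cast_one, one_mul, sub_self, abs_zero]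
    omega

theorem IsCZSeq.sum_le {ι : Type*} {μ : ℕ → ℤ} (hμ : IsCZSeq μ) (s : Finset ι) {K : ι → ℕ}
    (hK : ∀ i ∈ s, 1 ≤ K i) :
    ∑ i ∈ s, μ (K i) ≤ (∑ i ∈ s, K i : ℕ) * μ 1 + ((∑ i ∈ s, K i : ℕ) - s.card) := by
  calc ∑ i ∈ s, μ (K i) ≤ ∑ i ∈ s, ((K i : ℤ) * μ 1 + ((K i : ℤ) - 1)) :=
        Finset.sum_le_sum fun i hi => by
          linarith [(abs_le.mp (hμ.abs_sub_mul_le (hK i hi))).2]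
    _ = (∑ i ∈ s, K i : ℕ) * μ 1 + ((∑ i ∈ s, K i : ℕ) - s.card) := by
        push_cast
        rw [Finset.sum_add_distrib, Finset.sum_mul, Finset.sum_sub_distrib, Finset.sum_const,
          nsmul_one]

/-- Case (i) of the proposition on covers of nontrivial cylinders: if
μ₊(1) − μ₋(1) ≥ 2 and k = k₁ + ⋯ + kₙ with each kᵢ ≥ 1, then
(n − 1) + μ₊(k) − ∑ᵢ μ₋(kᵢ) ≥ 2n. -/
theorem cz_cover_cylinder_index_ge_two (μpos μneg : ℕ → ℤ)
    (hpos : IsCZSeq μpos) (hneg : IsCZSeq μneg)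
    (h : μpos 1 - μneg 1 ≥ 2)
    (n : ℕ) (hn : 1 ≤ n) (K : Fin n → ℕ) (hK : ∀ i, 1 ≤ K i)
    (k : ℕ) (hk : k = ∑ i, K i) :
    ((n : ℤ) - 1) + μpos k - ∑ i, μneg (K i) ≥ 2 * n := by
  have hnk : n ≤ k := by
    simpa [hk] using Finset.card_nsmul_le_sum Finset.univ K 1 fun i _ => hK i
  have hpos_lower : (k : ℤ) * μpos 1 - (k - 1) ≤ μpos k := by
    linarith [(abs_le.mp (hpos.abs_sub_mul_le (hn.trans hnk))).1]
  have hneg_upper : ∑ i, μneg (K i) ≤ (k : ℤ) * μneg 1 + (k - n) := by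
    simpa [← hk] using hneg.sum_le Finset.univ fun i _ => hK i
  have hgap : (k : ℤ) * 2 ≤ k * (μpos 1 - μneg 1) := mul_le_mul_of_nonneg_left h (by positivity)
  have hnk' : (n : ℤ) ≤ k := by exact_mod_cast hnk
  linarith
end
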